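/- Let (α_k)_{k≥1} be a sequence in 𝔻 and (a_k)_{k≥1} a sequence in 𝔻, with the orthogonal rational functions φ_k, φ*_k defined by the recurrence, and define χ_0 = 1, χ_{2n} = b^e_n φ*_{2n} and χ_{2n+1} = b^e_n φ_{2n+1} for n ≥ 0, where b^e_n(z) = ∏_{k=1}^n ϖ_{2k}(z)/ϖ*_{2k}(z) (b^e_0 = 1). Then the following five-term recurrence relations hold as identities of rational functions: ϖ*_0 χ_0 = ρ^+_1 ϖ_1 χ_1 − a_1 ϖ_0 χ_0, and for every n ≥ 1: ϖ*_{2n−1} χ_{2n−1} = ρ^+_{2n} ρ^+_{2n+1} ϖ_{2n+1} χ_{2n+1} − ρ^+_{2n} a_{2n+1} ϖ_{2n} χ_{2n} − conj(a_{2n−1}) a_{2n} ϖ_{2n−1} χ_{2n−1} − ρ^−_{2n−1} a_{2n} ϖ_{2n−2} χ_{2n−2}, and ϖ*_{2n} χ_{2n} = conj(a_{2n}) ρ^+_{2n+1} ϖ_{2n+1} χ_{2n+1} − conj(a_{2n}) a_{2n+1} ϖ_{2n} χ_{2n} + conj(a_{2n−1}) ρ^−_{2n} ϖ_{2n−1}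 χ_{2n−1} + ρ^−_{2n−1} ρ^−_{2n} ϖ_{2n−2} χ_{2n−2}. -/

import Mathlib

/-!
Orthogonal rational functions on the unit circle, as pointwise-defined functions:
`φ_0 = φ*_0 = 1` and, for `k ≥ 1`,
`φ_k = e_k (ϖ_{k−1}/ϖ_k)(ζ_{k−1} φ_{k−1} + a_k φ*_{k−1})`,
`φ*_k = e_k (ϖ_{k−1}/ϖ_k)(conj(a_k) ζ_{k−1} φ_{k−1} + φ*_{k−1})`.
-/

noncomputable section

/-- `ϖ_k(z) = 1 − conj(α_k) z`. -/
def pw (α : ℕ → ℂ) (k : ℕ) (z : ℂ) : ℂ := 1 - (starRingEnd ℂ) (α k) * z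

/-- `ϖ*_k(z) = z − α_k`. -/
def pws (α : ℕ → ℂ) (k : ℕ) (z : ℂ) : ℂ := z - α k

/-- `η_k = (1 − |α_k|²)^{1/2}`. -/
def etaS (α : ℕ → ℂ) (k : ℕ) : ℝ := Real.sqrt (1 - ‖α k‖ ^ 2)

/-- `ρ_k = (1 − |a_k|²)^{1/2}`. -/
def rhoS (a : ℕ → ℂ) (k : ℕ) : ℝ := Real.sqrt (1 - ‖a k‖ ^ 2)

/-- `ρ_k⁺ = (η_{k−1}/η_k) ρ_k`. -/
def rhoP (α a : ℕ → ℂ) (k : ℕ) : ℝ := etaS α (k - 1) / etaS α k * rhoS a k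

/-- `ρ_k⁻ = (η_k/η_{k−1}) ρ_k`. -/
def rhoM (α a : ℕ → ℂ) (k : ℕ) : ℝ := etaS α k / etaS α (k - 1) * rhoS a k

/-- `e_k = η_k/(η_{k−1} ρ_k)`. -/
def eS (α a : ℕ → ℂ) (k : ℕ) : ℝ := etaS α k / (etaS α (k - 1) * rhoS a k)

/-- The pair `(φ_k, φ*_k)` of orthogonal rational functions, defined by the recurrence. -/
def orfFun (α a : ℕ → ℂ) : ℕ → (ℂ → ℂ) × (ℂ → ℂ)
  | 0 => (fun _ => 1, fun _ => 1)
  | k + 1 =>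
    (fun z => (eS α a (k + 1) : ℂ) * (pw α k z / pw α (k + 1) z) *
        ((pws α k z / pw α k z) * (orfFun α a k).1 z + a (k + 1) * (orfFun α a k).2 z),
     fun z => (eS α a (k + 1) : ℂ) * (pw α k z / pw α (k + 1) z) *
        ((starRingEnd ℂ) (a (k + 1)) * (pws α k z / pw α k z) * (orfFun α a k).1 z +
          (orfFun α a k).2 z))

/-- `b^e_n(z) = ∏_{k=1}^n ϖ_{2k}(z)/ϖ*_{2k}(z)`. -/
def beF (α : ℕ → ℂ) (n : ℕ) (z : ℂ) : ℂ :=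
  ∏ k ∈ Finset.range n, pw α (2 * k + 2) z / pws α (2 * k + 2) z

/-- `χ_0 = 1`, `χ_{2n} = b^e_n φ*_{2n}`, `χ_{2n+1} = b^e_n φ_{2n+1}`. -/
def chiF (α a : ℕ → ℂ) (m : ℕ) (z : ℂ) : ℂ :=
  beF α (m / 2) z * (if m % 2 = 0 then (orfFun α a m).2 z else (orfFun α a m).1 z)

/-!
Clearing the denominators `ϖ_k` turns the recurrence into the Szegő-type step
`ϖ_{k+1} (φ_{k+1}, φ*_{k+1}) = e_{k+1} M_{k+1} (ϖ*_k φ_k, ϖ_k φ*_k)` with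
`M_{k+1} = [[1, a_{k+1}], [conj a_{k+1}, 1]]`. Since `ρ⁺_{k+1} e_{k+1} = 1` and
`det M_{k+1} = ρ_{k+1}²`, it can be read forwards for `φ_{k+1}` and backwards for `φ*_k`:
`ρ⁺_{k+1} ϖ_{k+1} φ_{k+1} = ϖ*_k φ_k + a_{k+1} ϖ_k φ*_k` and
`ρ⁻_{k+1} ϖ_k φ*_k = ϖ_{k+1} φ*_{k+1} − conj(a_{k+1}) ϖ_{k+1} φ_{k+1}`.
Multiplying by `b^e_m` (and by `ϖ_{2m+2}/ϖ*_{2m+2}` for the two top indices) expresses both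
`b^e_m ϖ_{2m+2} φ_{2m+2}` and `b^e_m ϖ_{2m+1} φ*_{2m+1}` through the `ϖ χ`; eliminating them
gives the two five-term relations.
-/

open ComplexConjugate

variable {α a : ℕ → ℂ} {z : ℂ}

lemma etaS_ne_zero {k : ℕ} (h : ‖α k‖ < 1) : etaS α k ≠ 0 :=
  (Real.sqrt_pos.2 (by nlinarith [norm_nonneg (α k)])).ne'

lemma rhoS_ne_zero {k : ℕ} (h : ‖a k‖ < 1) : rhoS a k ≠ 0 :=
  (Real.sqrt_pos.2 (by nlinarith [norm_nonneg (a k)])).ne'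

lemma ofReal_rhoS_sq {k : ℕ} (h : rhoS a k ≠ 0) :
    (rhoS a k : ℂ) ^ 2 = 1 - conj (a k) * a k := by
  have hpos : 0 ≤ 1 - ‖a k‖ ^ 2 := (Real.sqrt_ne_zero'.1 h).le
  rw [← Complex.ofReal_pow, rhoS, Real.sq_sqrt hpos, mul_comm, Complex.mul_conj,
    Complex.normSq_eq_norm_sq]
  push_cast
  ring

lemma pw_mul_orfFun_fst {k : ℕ} (hw : pw α k z ≠ 0) (hw' : pw α (k + 1) z ≠ 0) :
    pw α (k + 1) z * (orfFun α a (k + 1)).1 z =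
      eS α a (k + 1) *
        (pws α k z * (orfFun α a k).1 z + a (k + 1) * (pw α k z * (orfFun α a k).2 z)) := by
  simp only [orfFun]
  field_simp

lemma pw_mul_orfFun_snd {k : ℕ} (hw : pw α k z ≠ 0) (hw' : pw α (k + 1) z ≠ 0) :
    pw α (k + 1) z * (orfFun α a (k + 1)).2 z =
      eS α a (k + 1) *
        (conj (a (k + 1)) * (pws α k z * (orfFun α a k).1 z) +
          pw α k z * (orfFun α a k).2 z) := by
  simp only [orfFun]
  field_simp

lemma rhoP_mul_pw_orfFun_fst {k : ℕ} (hη : etaS α k ≠ 0) (hη' : etaS α (k + 1) ≠ 0)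
    (hρ : rhoS a (k + 1) ≠ 0) (hw : pw α k z ≠ 0) (hw' : pw α (k + 1) z ≠ 0) :
    rhoP α a (k + 1) * (pw α (k + 1) z * (orfFun α a (k + 1)).1 z) =
      pws α k z * (orfFun α a k).1 z + a (k + 1) * (pw α k z * (orfFun α a k).2 z) := by
  have he : rhoP α a (k + 1) * eS α a (k + 1) = 1 := by
    simp only [rhoP, eS, Nat.add_sub_cancel]
    field_simp
  rw [pw_mul_orfFun_fst hw hw', ← mul_assoc, ← Complex.ofReal_mul, he, Complex.ofReal_one,
    one_mul]

lemma rhoM_mul_pw_orfFun_snd {k : ℕ} (hρ : rhoS a (k + 1) ≠ 0)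
    (hw : pw α k z ≠ 0) (hw' : pw α (k + 1) z ≠ 0) :
    rhoM α a (k + 1) * (pw α k z * (orfFun α a k).2 z) =
      pw α (k + 1) z * (orfFun α a (k + 1)).2 z -
        conj (a (k + 1)) * (pw α (k + 1) z * (orfFun α a (k + 1)).1 z) := by
  have he : (eS α a (k + 1) : ℂ) * (rhoS a (k + 1) : ℂ) ^ 2 = rhoM α a (k + 1) := by
    simp only [rhoM, eS, Nat.add_sub_cancel]
    push_cast
    field_simp
  rw [pw_mul_orfFun_fst hw hw', pw_mul_orfFun_snd hw hw', ← he, ofReal_rhoS_sq hρ]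
  ring

lemma orfFun_zero : orfFun α a 0 = (fun _ => 1, fun _ => 1) := rfl

lemma chiF_zero : chiF α a 0 z = 1 := by
  simp [chiF, beF, orfFun]

lemma chiF_two_mul (m : ℕ) : chiF α a (2 * m) z = beF α m z * (orfFun α a (2 * m)).2 z := by
  simp [chiF]

lemma chiF_two_mul_add_one (m : ℕ) :
    chiF α a (2 * m + 1) z = beF α m z * (orfFun α a (2 * m + 1)).1 z := by
  simp [chiF, show (2 * m + 1) / 2 = m by omega, Nat.add_mod]

lemma beF_succ (m : ℕ) :
    beF α (m + 1) z = beF α m z * (pw α (2 * m + 2) z / pws α (2 * m + 2) z) :=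
  Finset.prod_range_succ _ _

lemma chiF_five_term_recurrence_succ (m : ℕ) (hη : ∀ k, etaS α k ≠ 0)
    (hρ : ∀ k, 1 ≤ k → rhoS a k ≠ 0) (hw : ∀ k, k ≤ 2 * m + 3 → pw α k z ≠ 0)
    (hws : pws α (2 * m + 2) z ≠ 0) :
    (pws α (2 * m + 1) z * chiF α a (2 * m + 1) z =
        rhoP α a (2 * m + 2) * rhoP α a (2 * m + 3) *
            (pw α (2 * m + 3) z * chiF α a (2 * m + 3) z) -
          rhoP α a (2 * m + 2) * a (2 * m + 3) * (pw α (2 * m + 2) z * chiF α a (2 * m + 2) z) -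
          conj (a (2 * m + 1)) * a (2 * m + 2) * (pw α (2 * m + 1) z * chiF α a (2 * m + 1) z) -
          rhoM α a (2 * m + 1) * a (2 * m + 2) * (pw α (2 * m) z * chiF α a (2 * m) z)) ∧
      (pws α (2 * m + 2) z * chiF α a (2 * m + 2) z =
        conj (a (2 * m + 2)) * rhoP α a (2 * m + 3) *
            (pw α (2 * m + 3) z * chiF α a (2 * m + 3) z) -
          conj (a (2 * m + 2)) * a (2 * m + 3) * (pw α (2 * m + 2) z * chiF α a (2 * m + 2) z) +
          conj (a (2 * m + 1)) * rhoM α a (2 * m + 2) *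
            (pw α (2 * m + 1) z * chiF α a (2 * m + 1) z) +
          rhoM α a (2 * m + 1) * rhoM α a (2 * m + 2) *
            (pw α (2 * m) z * chiF α a (2 * m) z)) := by
  set b := beF α m z
  set X := b * (pw α (2 * m + 2) z * (orfFun α a (2 * m + 2)).1 z)
  set Y := b * (pw α (2 * m + 1) z * (orfFun α a (2 * m + 1)).2 z)
  have c0 : chiF α a (2 * m) z = b * (orfFun α a (2 * m)).2 z := chiF_two_mul m
  have c1 : chiF α a (2 * m + 1) z = b * (orfFun α a (2 * m + 1)).1 z := chiF_two_mul_add_one m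
  have c2 : chiF α a (2 * m + 2) z =
      b * (pw α (2 * m + 2) z / pws α (2 * m + 2) z) * (orfFun α a (2 * m + 2)).2 z := by
    rw [← beF_succ]; exact chiF_two_mul (m + 1)
  have c3 : chiF α a (2 * m + 3) z =
      b * (pw α (2 * m + 2) z / pws α (2 * m + 2) z) * (orfFun α a (2 * m + 3)).1 z := by
    rw [← beF_succ]; exact chiF_two_mul_add_one (m + 1)
  have hX : rhoP α a (2 * m + 3) * (pw α (2 * m + 3) z * chiF α a (2 * m + 3) z) =
      X + a (2 * m + 3) * (pw α (2 * m + 2) z * chiF α a (2 * m + 2) z) := by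
    have step := rhoP_mul_pw_orfFun_fst (a := a) (k := 2 * m + 2) (hη _) (hη _) (hρ _ (by omega))
      (hw _ (by omega)) (hw _ le_rfl)
    rw [c2, c3]
    field_simp
    linear_combination b * pw α (2 * m + 2) z * step
  have hXY : rhoP α a (2 * m + 2) * X =
      pws α (2 * m + 1) z * chiF α a (2 * m + 1) z + a (2 * m + 2) * Y := by
    have step := rhoP_mul_pw_orfFun_fst (a := a) (k := 2 * m + 1) (hη _) (hη _) (hρ _ (by omega))
      (hw _ (by omega)) (hw _ (by omega))
    rw [c1]
    linear_combination b * step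
  have hY : rhoM α a (2 * m + 1) * (pw α (2 * m) z * chiF α a (2 * m) z) =
      Y - conj (a (2 * m + 1)) * (pw α (2 * m + 1) z * chiF α a (2 * m + 1) z) := by
    have step := rhoM_mul_pw_orfFun_snd (α := α) (k := 2 * m) (hρ _ (by omega))
      (hw _ (by omega)) (hw _ (by omega))
    rw [c0, c1]
    linear_combination b * step
  have hZ : pws α (2 * m + 2) z * chiF α a (2 * m + 2) z =
      conj (a (2 * m + 2)) * X + rhoM α a (2 * m + 2) * Y := by
    have step := rhoM_mul_pw_orfFun_snd (α := α) (k := 2 * m + 1) (hρ _ (by omega))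
      (hw _ (by omega)) (hw _ (by omega))
    rw [c2]
    field_simp
    linear_combination -b * step
  constructor
  · linear_combination -hXY - rhoP α a (2 * m + 2) * hX + a (2 * m + 2) * hY
  · linear_combination hZ - conj (a (2 * m + 2)) * hX - rhoM α a (2 * m + 2) * hY

theorem chi_five_term_recurrence_general
    (α a : ℕ → ℂ) (hα0 : α 0 = 0)
    (hα : ∀ k, 1 ≤ k → ‖α k‖ < 1) (ha : ∀ k, 1 ≤ k → ‖a k‖ < 1) :
    (∀ z : ℂ, (∀ k, k ≤ 1 → pw α k z ≠ 0 ∧ pws α k z ≠ 0) →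
      pws α 0 z * chiF α a 0 z =
        (rhoP α a 1 : ℂ) * (pw α 1 z * chiF α a 1 z) -
          a 1 * (pw α 0 z * chiF α a 0 z)) ∧
    ∀ n : ℕ, 1 ≤ n → ∀ z : ℂ,
      (∀ k, k ≤ 2 * n + 1 → pw α k z ≠ 0 ∧ pws α k z ≠ 0) →
      (pws α (2 * n - 1) z * chiF α a (2 * n - 1) z =
          (rhoP α a (2 * n) : ℂ) * (rhoP α a (2 * n + 1) : ℂ) *
              (pw α (2 * n + 1) z * chiF α a (2 * n + 1) z) -
            (rhoP α a (2 * n) : ℂ) * a (2 * n + 1) * (pw α (2 * n) z * chiF α a (2 * n) z) -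
            (starRingEnd ℂ) (a (2 * n - 1)) * a (2 * n) *
              (pw α (2 * n - 1) z * chiF α a (2 * n - 1) z) -
            (rhoM α a (2 * n - 1) : ℂ) * a (2 * n) *
              (pw α (2 * n - 2) z * chiF α a (2 * n - 2) z)) ∧
        (pws α (2 * n) z * chiF α a (2 * n) z =
          (starRingEnd ℂ) (a (2 * n)) * (rhoP α a (2 * n + 1) : ℂ) *
              (pw α (2 * n + 1) z * chiF α a (2 * n + 1) z) -
            (starRingEnd ℂ) (a (2 * n)) * a (2 * n + 1) *
              (pw α (2 * n) z * chiF α a (2 * n) z) +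
            (starRingEnd ℂ) (a (2 * n - 1)) * (rhoM α a (2 * n) : ℂ) *
              (pw α (2 * n - 1) z * chiF α a (2 * n - 1) z) +
            (rhoM α a (2 * n - 1) : ℂ) * (rhoM α a (2 * n) : ℂ) *
              (pw α (2 * n - 2) z * chiF α a (2 * n - 2) z)) := by
  have hη : ∀ k, etaS α k ≠ 0
    | 0 => etaS_ne_zero (by simp [hα0])
    | k + 1 => etaS_ne_zero (hα _ k.succ_pos)
  have hρ : ∀ k, 1 ≤ k → rhoS a k ≠ 0 := fun k hk => rhoS_ne_zero (ha k hk)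
  refine ⟨fun z hz => ?_, fun n hn z hz => ?_⟩
  · have step := rhoP_mul_pw_orfFun_fst (a := a) (k := 0) (hη 0) (hη 1) (hρ 1 le_rfl)
      (hz 0 zero_le_one).1 (hz 1 le_rfl).1
    have c1 : chiF α a 1 z = (orfFun α a 1).1 z := by simp [chiF, beF]
    rw [chiF_zero, c1]
    simp only [orfFun_zero] at step
    linear_combination -step
  · obtain ⟨m, rfl⟩ : ∃ m, n = m + 1 := ⟨n - 1, by omega⟩
    rw [show 2 * (m + 1) - 1 = 2 * m + 1 by omega, show 2 * (m + 1) - 2 = 2 * m by omega]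
    exact chiF_five_term_recurrence_succ m hη hρ (fun k hk => (hz k hk).1) (hz _ (by omega)).2

/-- the five-term recurrence for the `χ_n`, as identities of rational
functions (i.e. at every point where the factors `ϖ_k`, `ϖ*_k` with `k ≤ 2n+1` do not
vanish). -/
theorem chi_five_term_recurrence
    (α a : ℕ → ℂ) (hα0 : α 0 = 0) (ha0 : a 0 = 1)
    (hα : ∀ k, 1 ≤ k → ‖α k‖ < 1) (ha : ∀ k, 1 ≤ k → ‖a k‖ < 1) :
    (∀ z : ℂ, (∀ k, k ≤ 1 → pw α k z ≠ 0 ∧ pws α k z ≠ 0) →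
      pws α 0 z * chiF α a 0 z =
        (rhoP α a 1 : ℂ) * (pw α 1 z * chiF α a 1 z) -
          a 1 * (pw α 0 z * chiF α a 0 z)) ∧
    ∀ n : ℕ, 1 ≤ n → ∀ z : ℂ,
      (∀ k, k ≤ 2 * n + 1 → pw α k z ≠ 0 ∧ pws α k z ≠ 0) →
      (pws α (2 * n - 1) z * chiF α a (2 * n - 1) z =
          (rhoP α a (2 * n) : ℂ) * (rhoP α a (2 * n + 1) : ℂ) *
              (pw α (2 * n + 1) z * chiF α a (2 * n + 1) z) -
            (rhoP α a (2 * n) : ℂ) * a (2 * n + 1) * (pw α (2 * n) z * chiF α a (2 * n) z) -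
            (starRingEnd ℂ) (a (2 * n - 1)) * a (2 * n) *
              (pw α (2 * n - 1) z * chiF α a (2 * n - 1) z) -
            (rhoM α a (2 * n - 1) : ℂ) * a (2 * n) *
              (pw α (2 * n - 2) z * chiF α a (2 * n - 2) z)) ∧
        (pws α (2 * n) z * chiF α a (2 * n) z =
          (starRingEnd ℂ) (a (2 * n)) * (rhoP α a (2 * n + 1) : ℂ) *
              (pw α (2 * n + 1) z * chiF α a (2 * n + 1) z) -
            (starRingEnd ℂ) (a (2 * n)) * a (2 * n + 1) *
              (pw α (2 * n) z * chiF α a (2 * n) z) +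
            (starRingEnd ℂ) (a (2 * n - 1)) * (rhoM α a (2 * n) : ℂ) *
              (pw α (2 * n - 1) z * chiF α a (2 * n - 1) z) +
            (rhoM α a (2 * n - 1) : ℂ) * (rhoM α a (2 * n) : ℂ) *
              (pw α (2 * n - 2) z * chiF α a (2 * n - 2) z)) :=
  chi_five_term_recurrence_general α a hα0 hα ha
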